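/- arXiv:1908.11547 — 2 statements merged into one kernel-verified Lean document; each statement's English description precedes it below -/
import Mathlib

section
/- Let H be a Hermitian operator on a finite-dimensional Hilbert space with nondegenerate ground state |0⟩ and spectral gap Δ > 0. Let H_t be another Hermitian operator with nondegenerate ground state |0_t⟩, and write δH = H − H_t. If 4‖δH‖ < Δ, then (with phases chosen so ⟨0|0_t⟩ ≥ 0) the norm distance satisfies ‖|0⟩ − |0_t⟩‖ ≤ ‖δH‖ / (Δ − 4‖δH‖). -/
set_option maxHeartbeats 1000000 in
/-- Let `H` be a Hermitian operator on a finite-dimensional Hilbert space with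
nondegenerate ground state `v` (eigenvalue `E₀`, spectral gap `Δ > 0`: every state
orthogonal to `v` has energy at least `E₀ + Δ`).  Let `Hₜ` be another Hermitian
operator with nondegenerate ground state `u` (minimal eigenvalue `Et₀`), and write
`δH = H − Hₜ`.  If `4‖δH‖ < Δ`, then (with the phases chosen so that `⟨v,u⟩` is a
nonnegative real) the norm distance satisfies `‖v − u‖ ≤ ‖δH‖ / (Δ − 4‖δH‖)`. -/
theorem ground_state_perturbation {E : Type*} [NormedAddCommGroup E]
    [InnerProductSpace ℂ E] [FiniteDimensional ℂ E]
    (H Ht : E →L[ℂ] E) (hH : IsSelfAdjoint H) (hHt : IsSelfAdjoint Ht)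
    (E₀ Et₀ Δ : ℝ) (hΔ : 0 < Δ)
    (v : E) (hv : ‖v‖ = 1) (hHv : H v = (E₀ : ℂ) • v)
    (hgap : ∀ w : E, (inner ℂ v w : ℂ) = 0 → (E₀ + Δ) * ‖w‖ ^ 2 ≤ (inner ℂ w (H w) : ℂ).re)
    (u : E) (hu : ‖u‖ = 1) (hHtu : Ht u = (Et₀ : ℂ) • u)
    (hmin : ∀ w : E, Et₀ * ‖w‖ ^ 2 ≤ (inner ℂ w (Ht w) : ℂ).re)
    (hphase : (inner ℂ v u : ℂ).im = 0 ∧ 0 ≤ (inner ℂ v u : ℂ).re)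
    (hsmall : 4 * ‖H - Ht‖ < Δ) :
    ‖v - u‖ ≤ ‖H - Ht‖ / (Δ - 4 * ‖H - Ht‖) := by
  set ε := ‖H - Ht‖ with hεdef
  have hε0 : 0 ≤ ε := norm_nonneg _
  have hεΔ : ε < Δ := by linarith
  have hpos : 0 < Δ - 4 * ε := by linarith
  set c : ℝ := (inner ℂ v u : ℂ).re with hcdef
  have hc0 : 0 ≤ c := hphase.2
  have hcu : (inner ℂ v u : ℂ) = (c : ℂ) := by
    apply Complex.ext
    · simp [hcdef]
    · simp [hphase.1]
  have huv : (inner ℂ u v : ℂ) = (c : ℂ) := by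
    rw [← inner_conj_symm, hcu]
    simp
  set w : E := u - (c : ℂ) • v with hwdef
  have hvv : (inner ℂ v v : ℂ) = 1 := by
    rw [inner_self_eq_norm_sq_to_K (𝕜 := ℂ), hv]; norm_num
  have hvw : (inner ℂ v w : ℂ) = 0 := by
    rw [hwdef, inner_sub_right, inner_smul_right, hvv, hcu]; ring
  have hwv : (inner ℂ w v : ℂ) = 0 := by
    rw [← inner_conj_symm, hvw, map_zero]
  have huw : u = (c : ℂ) • v + w := by simp [hwdef]
  set t : ℝ := ‖w‖ with htdef
  have ht0 : 0 ≤ t := norm_nonneg _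
  have hww : (inner ℂ w w : ℂ) = ((t ^ 2 : ℝ) : ℂ) := by
    rw [htdef]; exact_mod_cast inner_self_eq_norm_sq_to_K (𝕜 := ℂ) w
  have hwu : (inner ℂ w u : ℂ) = ((t ^ 2 : ℝ) : ℂ) := by
    rw [huw, inner_add_right, inner_smul_right, hwv, hww]; ring
  have huu : (inner ℂ u u : ℂ) = 1 := by
    rw [inner_self_eq_norm_sq_to_K (𝕜 := ℂ), hu]; norm_num
  -- Pythagoras : c² + t² = 1
  have hpyth : c ^ 2 + t ^ 2 = 1 := by
    have h1 : (inner ℂ u u : ℂ) = ((c ^ 2 + t ^ 2 : ℝ) : ℂ) := by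
      nth_rewrite 1 [huw]
      rw [inner_add_left, inner_smul_left, hcu, hwu, Complex.conj_ofReal]
      push_cast
      ring
    rw [huu] at h1
    have := Complex.ofReal_inj.mp h1.symm
    linarith [this]
  have hc1 : c ≤ 1 := by nlinarith
  -- bound on re inner ℂ with δH
  have hbound : ∀ x y : E, ‖x‖ = 1 → |(inner ℂ x ((H - Ht) y) : ℂ).re| ≤ ε * ‖y‖ := by
    intro x y hx
    have h1 : ‖(inner ℂ x ((H - Ht) y) : ℂ)‖ ≤ ‖x‖ * ‖(H - Ht) y‖ := norm_inner_le_norm _ _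
    have h2 : ‖(H - Ht) y‖ ≤ ε * ‖y‖ := (H - Ht).le_opNorm y
    have h3 : |(inner ℂ x ((H - Ht) y) : ℂ).re| ≤ ‖(inner ℂ x ((H - Ht) y) : ℂ)‖ :=
      Complex.abs_re_le_norm _
    rw [hx, one_mul] at h1
    linarith
  -- Et₀ ≤ E₀ + ε
  have hEt : Et₀ ≤ E₀ + ε := by
    have h1 := hmin v
    rw [hv] at h1
    have h2 : (inner ℂ v (Ht v) : ℂ) = (E₀ : ℂ) - inner ℂ v ((H - Ht) v) := by
      have h3 : Ht v = H v - (H - Ht) v := by simp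
      rw [h3, inner_sub_right, hHv, inner_smul_right, hvv]; ring
    have h4 : (inner ℂ v (Ht v) : ℂ).re = E₀ - (inner ℂ v ((H - Ht) v) : ℂ).re := by
      rw [h2]; simp
    have h5 := hbound v v hv
    rw [hv] at h5
    have h6 := abs_le.mp h5
    rw [one_pow, mul_one, h4] at h1
    linarith
  -- key : (Δ - ε) * t ≤ ε
  have hHw : H w = (Et₀ : ℂ) • u + (H - Ht) u - ((c : ℂ) * (E₀ : ℂ)) • v := by
    have h2 : H u = Ht u + (H - Ht) u := by simp
    rw [hwdef, map_sub, map_smul, h2, hHtu, hHv, smul_smul]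
  have hkey : (Δ - ε) * t ≤ ε := by
    have h1 := hgap w hvw
    have h2c : (inner ℂ w (H w) : ℂ)
        = ((Et₀ * t ^ 2 : ℝ) : ℂ) + inner ℂ w ((H - Ht) u) := by
      rw [hHw, inner_sub_right, inner_add_right, inner_smul_right, inner_smul_right, hwu, hwv]
      push_cast
      ring
    have h2 : (inner ℂ w (H w) : ℂ).re = Et₀ * t ^ 2 + (inner ℂ w ((H - Ht) u) : ℂ).re := by
      rw [h2c, Complex.add_re, Complex.ofReal_re]
    have h3 := hbound w u
    have h4 := abs_le.mp ((hbound u u hu))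
    have h5 : (inner ℂ w ((H - Ht) u) : ℂ).re ≤ ε * t := by
      have h6 : ‖(inner ℂ w ((H - Ht) u) : ℂ)‖ ≤ ‖w‖ * ‖(H - Ht) u‖ := norm_inner_le_norm _ _
      have h7 : ‖(H - Ht) u‖ ≤ ε * ‖u‖ := (H - Ht).le_opNorm u
      have h8 : (inner ℂ w ((H - Ht) u) : ℂ).re ≤ ‖(inner ℂ w ((H - Ht) u) : ℂ)‖ :=
        Complex.re_le_norm _
      rw [hu, mul_one] at h7
      nlinarith [norm_nonneg ((H - Ht) u)]
    have h9 : (E₀ + Δ) * t ^ 2 ≤ Et₀ * t ^ 2 + ε * t := by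
      rw [← htdef, h2] at h1
      linarith
    have h10 : (Δ - ε) * t ^ 2 ≤ ε * t := by nlinarith [sq_nonneg t]
    rcases eq_or_lt_of_le ht0 with h | h
    · rw [← h]; simpa using hε0
    · have := le_of_mul_le_mul_right (by nlinarith : (Δ - ε) * t * t ≤ ε * t) h
      linarith
  -- 1 - c ≤ t²
  have h1c : 1 - c ≤ t ^ 2 := by nlinarith
  -- ‖v - u‖² = 2 - 2c
  have hn2 : ‖v - u‖ ^ 2 = 2 - 2 * c := by
    have h1 : (inner ℂ (v - u) (v - u) : ℂ) = ((2 - 2 * c : ℝ) : ℂ) := by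
      rw [inner_sub_left, inner_sub_right, inner_sub_right, hvv, hcu, huv, huu]
      push_cast; ring
    have h2 : (inner ℂ (v - u) (v - u) : ℂ) = ((‖v - u‖ ^ 2 : ℝ) : ℂ) := by
      exact_mod_cast inner_self_eq_norm_sq_to_K (𝕜 := ℂ) (v - u)
    rw [h2] at h1
    exact_mod_cast h1
  set n : ℝ := ‖v - u‖ with hndef
  have hn0 : 0 ≤ n := norm_nonneg _
  -- 3t ≤ 1
  have ht3 : 3 * t ≤ 1 := by nlinarith
  -- n² ≤ t² + t⁴
  have hn4 : n ^ 2 ≤ t ^ 2 + t ^ 4 := by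
    nlinarith [mul_self_le_mul_self (by linarith : (0:ℝ) ≤ 1 - c) h1c]
  -- polynomial bound
  have hta : t * (Δ - 4 * ε) ≤ ε * (1 - 3 * t) := by nlinarith
  have h4 : (t * (Δ - 4 * ε)) ^ 2 ≤ (ε * (1 - 3 * t)) ^ 2 := by
    have := mul_self_le_mul_self (by positivity) hta
    nlinarith
  have hfin : (1 - 3 * t) ^ 2 * (1 + t ^ 2) ≤ 1 := by
    nlinarith [mul_nonneg ht0 (by linarith : (0:ℝ) ≤ 1 - 3 * t),
      mul_nonneg (mul_nonneg ht0 ht0) (by linarith : (0:ℝ) ≤ 1 - 3 * t),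
      mul_nonneg (mul_nonneg (mul_nonneg ht0 ht0) ht0) (by linarith : (0:ℝ) ≤ 1 - 3 * t),
      pow_nonneg ht0 3]
  have hkey2 : n ^ 2 * (Δ - 4 * ε) ^ 2 ≤ ε ^ 2 := by
    nlinarith [h4, hfin, hn4, sq_nonneg t, sq_nonneg ε, sq_nonneg (t * (Δ - 4 * ε)),
      mul_nonneg (sq_nonneg ε) (sq_nonneg t),
      mul_le_mul_of_nonneg_right hn4 (sq_nonneg (Δ - 4 * ε)),
      mul_le_mul_of_nonneg_right h4 (by positivity : (0:ℝ) ≤ 1 + t ^ 2),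
      mul_le_mul_of_nonneg_left hfin (sq_nonneg ε)]
  -- conclude
  rw [le_div_iff₀ hpos]
  nlinarith [hkey2, mul_nonneg hn0 (le_of_lt hpos), sq_nonneg (n * (Δ - 4 * ε) - ε)]
end

section
/- Let T_m be the m-th Chebyshev polynomial of the first kind. Then |T_m(x)| ≤ 1 for |x| ≤ 1, and for |x| ≥ 1, (1/2)·exp(2m·√((|x|−1)/(|x|+1))) ≤ |T_m(x)| ≤ (1/2)·(2|x|)^m. -/
/-!
For `|x| ≥ 1` write `|x| = cosh t` with `t ≥ 0`; by parity `|T_m(x)| = cosh (m t)`.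
The lower bound follows from `cosh (m t) ≥ e^{m t} / 2` and
`t ≥ 2 tanh (t / 2) = 2 √((cosh t - 1) / (cosh t + 1))`, the upper bound from
`e^{m t} + e^{-m t} ≤ (e^t + e^{-t})^m`.
-/

open Polynomial Polynomial.Chebyshev Real

lemma Polynomial.Chebyshev.abs_eval_T_real_abs (n : ℤ) (x : ℝ) :
    |(T ℝ n).eval (|x|)| = |(T ℝ n).eval x| := by
  rcases abs_choice x with h | h <;> simp [h, T_eval_neg, abs_mul]

lemma Real.tanh_le_self {u : ℝ} (hu : 0 ≤ u) : tanh u ≤ u := by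
  have hmono : MonotoneOn (fun v => v * cosh v - sinh v) (Set.Ici 0) := by
    have hderiv (v : ℝ) : HasDerivAt (fun v => v * cosh v - sinh v) (v * sinh v) v :=
      (((hasDerivAt_id' v).fun_mul (hasDerivAt_cosh v)).fun_sub (hasDerivAt_sinh v)).congr_deriv
        (by ring)
    refine monotoneOn_of_hasDerivWithinAt_nonneg (convex_Ici 0)
      (fun v _ => (hderiv v).continuousAt.continuousWithinAt)
      (fun v _ => (hderiv v).hasDerivWithinAt) fun v hv => ?_
    rw [interior_Ici] at hv
    exact mul_nonneg (le_of_lt hv) (sinh_nonneg_iff.mpr (le_of_lt hv))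
  have h := hmono Set.self_mem_Ici hu hu
  simp only [zero_mul, sinh_zero, sub_zero] at h
  rw [tanh_eq_sinh_div_cosh, div_le_iff₀ (cosh_pos u)]
  linarith

lemma Real.sqrt_cosh_sub_one_div_cosh_add_one {t : ℝ} (ht : 0 ≤ t) :
    √((cosh t - 1) / (cosh t + 1)) = tanh (t / 2) := by
  have hcosh : cosh t = cosh (t / 2) ^ 2 + sinh (t / 2) ^ 2 := by
    rw [← cosh_two_mul, mul_div_cancel₀ t two_ne_zero]
  have hsq : (cosh t - 1) / (cosh t + 1) = tanh (t / 2) ^ 2 := by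
    rw [tanh_eq_sinh_div_cosh, hcosh, div_pow, cosh_sq]
    field_simp
    ring
  rw [hsq, sqrt_sq]
  rw [tanh_eq_sinh_div_cosh]
  exact div_nonneg (sinh_nonneg_iff.mpr (by linarith)) (cosh_pos _).le

lemma Real.two_mul_cosh_nat_mul_le (t : ℝ) {m : ℕ} (hm : m ≠ 0) :
    2 * cosh (m * t) ≤ (2 * cosh t) ^ m := by
  have h := pow_add_pow_le (exp_pos t).le (exp_pos (-t)).le hm
  rw [← exp_nat_mul, ← exp_nat_mul, mul_neg] at h
  calc 2 * cosh (m * t) = exp (m * t) + exp (-(m * t)) := by rw [cosh_eq]; ring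
    _ ≤ (exp t + exp (-t)) ^ m := h
    _ = (2 * cosh t) ^ m := by rw [cosh_eq]; ring

/-- Let `T_m` be the `m`-th Chebyshev polynomial of the first kind.  Then
`|T_m(x)| ≤ 1` for `|x| ≤ 1`, and for `|x| ≥ 1`,
`(1/2)·exp(2m·√((|x|−1)/(|x|+1))) ≤ |T_m(x)| ≤ (1/2)·(2|x|)^m`. -/
theorem chebyshev_boxcar_bounds (m : ℕ) (hm : 1 ≤ m) (x : ℝ) :
    (|x| ≤ 1 → |(Polynomial.Chebyshev.T ℝ m).eval x| ≤ 1) ∧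
    (1 ≤ |x| →
      (1 / 2) * Real.exp (2 * m * Real.sqrt ((|x| - 1) / (|x| + 1))) ≤
          |(Polynomial.Chebyshev.T ℝ m).eval x| ∧
        |(Polynomial.Chebyshev.T ℝ m).eval x| ≤ (1 / 2) * (2 * |x|) ^ m) := by
  refine ⟨abs_eval_T_real_le_one m, fun hx => ?_⟩
  set t := arcosh |x|
  have ht : 0 ≤ t := arcosh_nonneg hx
  have hT : |(T ℝ m).eval x| = cosh (m * t) := by
    rw [← abs_eval_T_real_abs, ← cosh_arcosh hx, T_real_cosh, abs_of_pos (cosh_pos _)]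
    norm_cast
  rw [hT, ← cosh_arcosh hx, sqrt_cosh_sub_one_div_cosh_add_one ht]
  constructor
  · calc 1 / 2 * exp (2 * m * tanh (t / 2)) ≤ 1 / 2 * exp (m * t) := by
          have := tanh_le_self (u := t / 2) (by positivity)
          gcongr 1 / 2 * exp ?_
          nlinarith
      _ ≤ cosh (m * t) := by
          rw [cosh_eq]
          linarith [exp_pos (-(m * t))]
  · linarith [two_mul_cosh_nat_mul_le t (Nat.one_le_iff_ne_zero.mp hm)]
end
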